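/- arXiv:2412.00700 — 3 statements merged into one kernel-verified Lean document; each statement's English description precedes it below -/
import Mathlib

section
/- Let k, m, n be integers with k ≥ 3, m ≥ 3, and n ≥ (k-1)m + 1. Define h(s) = k(k-1)s² - (kn - 2k + 2)s + m - n. Then h(s) < 0 for every integer s with 2 ≤ s ≤ m - 1. -/
/-! Since `h` decreases in `n` for `s ≥ 0`, its values at `s = 2` and `s = m - 1` are at most
those for `n = (k-1)m + 1`, which are explicit polynomials in `k, m` and negative. As `h` is a
convex quadratic in `s`, negativity at both endpoints gives negativity in between. -/

/-- h(s) = k(k-1)s² - (kn - 2k + 2)s + (m - n) -/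
def h (k m n s : ℤ) : ℤ := k*(k-1)*s^2 - (k*n - 2*k + 2)*s + (m - n)

theorem quadratic_neg_of_neg_at_endpoints {R : Type*} [CommRing R] [LinearOrder R]
    [IsStrictOrderedRing R] {c d e a b s : R} (hc : 0 ≤ c) (has : a ≤ s) (hsb : s ≤ b)
    (ha : c * a ^ 2 - d * a + e < 0) (hb : c * b ^ 2 - d * b + e < 0) :
    c * s ^ 2 - d * s + e < 0 := by
  rcases hsb.eq_or_lt with rfl | hsb
  · exact hb
  have interpolation : (b - a) * (c * s ^ 2 - d * s + e)
      = (b - s) * (c * a ^ 2 - d * a + e) + (s - a) * (c * b ^ 2 - d * b + e)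
        - c * ((s - a) * (b - s) * (b - a)) := by ring
  have hsa : 0 ≤ s - a := sub_nonneg.mpr has
  have hbs : 0 < b - s := sub_pos.mpr hsb
  have hba : 0 ≤ b - a := by linarith
  have hgap : 0 ≤ c * ((s - a) * (b - s) * (b - a)) := by positivity
  refine neg_of_mul_neg_right ?_ hba
  rw [interpolation]
  nlinarith [mul_neg_of_pos_of_neg hbs ha, mul_nonpos_of_nonneg_of_nonpos hsa hb.le]

theorem h_antitone_in_n {k m s : ℤ} (hk : 0 ≤ k) (hs : 0 ≤ s) :
    Antitone fun n => h k m n s := by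
  intro n₀ n hn
  show h k m n s ≤ h k m n₀ s
  have : h k m n s = h k m n₀ s - (k * s + 1) * (n - n₀) := by unfold h; ring
  rw [this]
  nlinarith [mul_nonneg hk hs]

theorem h_two_neg {k m : ℤ} (hk : 3 ≤ k) (hm : 3 ≤ m) : h k m ((k - 1) * m + 1) 2 < 0 := by
  have : h k m ((k - 1) * m + 1) 2 = 4 * k ^ 2 - 2 * k - 5 - (2 * k ^ 2 - k - 2) * m := by
    unfold h; ring
  have hcoef : 0 ≤ 2 * k ^ 2 - k - 2 := by nlinarith
  rw [this]
  nlinarith [mul_le_mul_of_nonneg_left hm hcoef]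

theorem h_sub_one_neg {k m : ℤ} (hk : 3 ≤ k) (hm : 3 ≤ m) :
    h k m ((k - 1) * m + 1) (m - 1) < 0 := by
  have : h k m ((k - 1) * m + 1) (m - 1) = -(m - 1) * ((k - 1) ^ 2 + 1) - (k - 2) * m - 1 := by
    unfold h; ring
  rw [this]
  nlinarith

theorem stmt_2 (k m n : ℤ) (hk : 3 ≤ k) (hm : 3 ≤ m)
    (hn : (k-1)*m + 1 ≤ n) :
    ∀ s : ℤ, 2 ≤ s → s ≤ m - 1 → h k m n s < 0 := by
  intro s h2s hsm
  have hk0 : (0 : ℤ) ≤ k := by linarith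
  have at_two : h k m n 2 < 0 :=
    (h_antitone_in_n hk0 zero_le_two hn).trans_lt (h_two_neg hk hm)
  have at_m_sub_one : h k m n (m - 1) < 0 :=
    (h_antitone_in_n hk0 (by linarith) hn).trans_lt (h_sub_one_neg hk hm)
  exact quadratic_neg_of_neg_at_endpoints (mul_nonneg hk0 (by linarith)) h2s hsm
    at_two at_m_sub_one
end

section
/- Let k, m, n, s be integers with k ≥ 3, m ≥ 3, n ≥ (k-1)m + 1, and 2 ≤ s ≤ m - 1. Define ψ(x) = (k-2)x² - (2km + kn - 3m - n - 2ks - 2k + 2s + 2)x - kms - km + ms + m - kns - kn + ns + n + km² - m² + kmn - mn. Then ψ(m + (k-1)s) < 0. -/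
/-!
Substituting x = m + (k-1)s, ψ(x) factors as (k-1)·h(s). The quadratic h decreases in n with
slope -(ks+1), and at the smallest admissible n = (k-1)m + 1 it equals -(m-s)(k(k-1)s + k - 2) - 1,
so h(s) is minus a sum of nonnegative terms and 1.
-/

/-- ψ(x) as in the paper (integer version). -/
def psi (k m n s x : ℤ) : ℤ :=
  (k-2)*x^2 - (2*k*m + k*n - 3*m - n - 2*k*s - 2*k + 2*s + 2)*x
    - k*m*s - k*m + m*s + m - k*n*s - k*n + n*s + n + k*m^2 - m^2 + k*m*n - m*n

theorem psi_shift_eq (k m n s : ℤ) :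
    psi k m n s (m + (k-1)*s) = (k-1) * (k*(k-1)*s^2 - (k*n - 2*k + 2)*s + m - n) := by
  unfold psi
  ring

theorem shift_quadratic_eq (k m n s : ℤ) :
    k*(k-1)*s^2 - (k*n - 2*k + 2)*s + m - n
      = -((m-s)*(k*(k-1)*s + k - 2) + (k*s + 1)*(n - ((k-1)*m + 1)) + 1) := by
  ring

theorem psi_shift_neg {k m n s : ℤ} (hk : 2 ≤ k) (hs : 0 ≤ s) (hsm : s ≤ m)
    (hn : (k-1)*m + 1 ≤ n) : psi k m n s (m + (k-1)*s) < 0 := by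
  rw [psi_shift_eq, shift_quadratic_eq]
  have hgap : 0 ≤ (m-s)*(k*(k-1)*s + k - 2) :=
    mul_nonneg (by linarith) (by nlinarith [mul_nonneg (by nlinarith : (0:ℤ) ≤ k*(k-1)) hs])
  have hslope : 0 ≤ (k*s + 1)*(n - ((k-1)*m + 1)) :=
    mul_nonneg (by nlinarith) (by linarith)
  exact mul_neg_of_pos_of_neg (by linarith) (by linarith)

theorem stmt_8_general (k m n s : ℤ) (hk : 3 ≤ k)
    (hn : (k-1)*m + 1 ≤ n) (hs1 : 2 ≤ s) (hs2 : s ≤ m - 1) :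
    psi k m n s (m + (k-1)*s) < 0 :=
  psi_shift_neg (by linarith) (by linarith) (by linarith) hn

theorem stmt_8 (k m n s : ℤ) (hk : 3 ≤ k) (hm : 3 ≤ m)
    (hn : (k-1)*m + 1 ≤ n) (hs1 : 2 ≤ s) (hs2 : s ≤ m - 1) :
    psi k m n s (m + (k-1)*s) < 0 :=
  stmt_8_general k m n s hk hn hs1 hs2
end

section
/- Let G be a connected bipartite simple graph with bipartition A ∪ B, and let f : A → ℤ with f(v) ≥ 2 for all v ∈ A. If G contains a spanning tree T such that d_T(v) ≥ f(v) for all v ∈ A, then for every nonempty S ⊆ A, |N_G(S)| ≥ Σ_{v∈S} f(v) - |S| + 1. -/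
/-!
The `T`-edges at `S` form the forest `T.between S N`, where `N = N_G(S)`. Since `S ⊆ A` and
`N ⊆ B`, this forest is bipartite with side `S`, so it has exactly `∑_{v ∈ S} d_T(v)` edges; and a
forest whose vertices lie in the nonempty set `S ∪ N` has at most `|S| + |N| - 1` edges, as it
extends to a spanning tree of the complete graph on `S ∪ N`.
-/

open Finset

namespace SimpleGraph

variable {V : Type*} {G : SimpleGraph V}

lemma IsAcyclic.card_edgeFinset_add_one_le [Finite V] [Nonempty V] [Fintype G.edgeSet]
    (hG : G.IsAcyclic) : #G.edgeFinset + 1 ≤ Nat.card V := by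
  classical
  have := Fintype.ofFinite V
  obtain ⟨F, hGF, -, hF⟩ := connected_top.exists_isTree_le_of_le_of_isAcyclic le_top hG
  rw [Nat.card_eq_fintype_card, ← hF.card_edgeFinset]
  gcongr

lemma IsAcyclic.card_edgeFinset_add_one_le_of_support_subset [Fintype V] [DecidableRel G.Adj]
    (hG : G.IsAcyclic) {s : Finset V} (hs : s.Nonempty) (hsupp : G.support ⊆ s) :
    #G.edgeFinset + 1 ≤ #s := by
  classical
  have : Nonempty s := hs.to_subtype
  rw [← card_edgeFinset_induce_of_support_subset hsupp]
  have h := (hG.induce (s : Set V)).card_edgeFinset_add_one_le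
  rw [Nat.card_coe_set_eq, Set.ncard_coe_finset] at h
  convert h

lemma IsAcyclic.sum_degree_add_one_le_card_add_card [Fintype V] [DecidableRel G.Adj] (hG : G.IsAcyclic)
    {s t : Finset V} (hs : s.Nonempty) (hst : Disjoint s t)
    (hnbr : ∀ v ∈ s, G.neighborSet v ⊆ t) :
    ∑ v ∈ s, G.degree v + 1 ≤ #s + #t := by
  classical
  have hK : (G.between s t).IsBipartiteWith s t := between_isBipartiteWith (disjoint_coe.2 hst)
  have hdeg : ∀ v ∈ s, (G.between s t).degree v = G.degree v := by
    intro v hv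
    simp only [← card_neighborFinset_eq_degree]
    congr 1
    ext w
    simp only [mem_neighborFinset, between_adj]
    exact and_iff_left_of_imp fun hvw ↦ .inl ⟨hv, hnbr v hv hvw⟩
  calc ∑ v ∈ s, G.degree v + 1 = #(G.between s t).edgeFinset + 1 := by
        rw [← sum_congr rfl hdeg, isBipartiteWith_sum_degrees_eq_card_edges hK]
    _ ≤ #(s ∪ t) :=
        (hG.anti between_le).card_edgeFinset_add_one_le_of_support_subset
          (hs.mono subset_union_left) (by simpa using isBipartiteWith_support_subset hK)
    _ = #s + #t := card_union_of_disjoint hst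

end SimpleGraph

open SimpleGraph

theorem stmt_15_general {V : Type*} [Fintype V] (G : SimpleGraph V)
    (A B : Set V)
    (hpart : ∀ v, (v ∈ A ∧ v ∉ B) ∨ (v ∈ B ∧ v ∉ A))
    (hbip : ∀ u v, G.Adj u v → (u ∈ A ∧ v ∈ B) ∨ (u ∈ B ∧ v ∈ A))
    (f : V → ℤ)
    (T : SimpleGraph V) (hTG : T ≤ G) (hTacyc : T.IsAcyclic)
    (hdeg : ∀ v ∈ A, f v ≤ ((T.neighborSet v).ncard : ℤ)) :
    ∀ S : Finset V, ↑S ⊆ A → S.Nonempty →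
      (∑ v ∈ S, f v) - S.card + 1 ≤ (({u | ∃ v ∈ S, G.Adj v u} : Set V).ncard : ℤ) := by
  classical
  intro S hSA hS
  set N := ({u | ∃ v ∈ S, G.Adj v u} : Set V).toFinset
  have hnbr : ∀ v ∈ S, T.neighborSet v ⊆ N := fun v hv u huv ↦ by
    simpa [N] using ⟨v, hv, hTG huv⟩
  have hSN : Disjoint S N := by
    refine disjoint_left.2 fun u huS huN ↦ ?_
    obtain ⟨v, hvS, hvu⟩ : ∃ v ∈ S, G.Adj v u := by simpa [N] using huN
    have := hSA hvS; have := hSA huS; have := hpart u; have := hpart v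
    rcases hbip v u hvu with h | h <;> tauto
  have hforest := hTacyc.sum_degree_add_one_le_card_add_card hS hSN hnbr
  have hfdeg : ∀ v ∈ S, f v ≤ T.degree v := fun v hv ↦ by
    rw [← card_neighborSet_eq_degree, ← Nat.card_eq_fintype_card, Nat.card_coe_set_eq]
    exact hdeg v (hSA hv)
  rw [Set.ncard_eq_toFinset_card']
  calc (∑ v ∈ S, f v) - #S + 1 ≤ ∑ v ∈ S, (T.degree v : ℤ) - #S + 1 := by
        gcongr with v hv; exact hfdeg v hv
    _ ≤ #N := by linarith

theorem stmt_15 {V : Type*} [Fintype V] (G : SimpleGraph V) (hconn : G.Connected)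
    (A B : Set V)
    (hpart : ∀ v, (v ∈ A ∧ v ∉ B) ∨ (v ∈ B ∧ v ∉ A))
    (hbip : ∀ u v, G.Adj u v → (u ∈ A ∧ v ∈ B) ∨ (u ∈ B ∧ v ∈ A))
    (f : V → ℤ) (hf : ∀ v ∈ A, 2 ≤ f v)
    (T : SimpleGraph V) (hTG : T ≤ G) (hTconn : T.Connected) (hTacyc : T.IsAcyclic)
    (hdeg : ∀ v ∈ A, f v ≤ ((T.neighborSet v).ncard : ℤ)) :
    ∀ S : Finset V, ↑S ⊆ A → S.Nonempty →
      (∑ v ∈ S, f v) - S.card + 1 ≤ (({u | ∃ v ∈ S, G.Adj v u} : Set V).ncard : ℤ) :=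
  stmt_15_general G A B hpart hbip f T hTG hTacyc hdeg
end
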